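/- arXiv:2009.09124 — 3 statements merged into one kernel-verified Lean document; each statement's English description precedes it below -/
import Mathlib

section
/- Let (R,σ) be a commutative ring with involution, let I ⊆ Jac(R) be an ideal contained in the Jacobson radical with σ(I) = I, and let (E,b) be a Hermitian module over R. Suppose E/IE decomposes orthogonally as F̄ ⊥ Ḡ over R/I with F̄ free and non-degenerate. Then there is an orthogonal decomposition E = F ⊥ G over R with F free and non-degenerate, such that F/IF = F̄ and G/IG = Ḡ. -/
/-!
Since `I ⊆ Jac(R)`, the Gram determinant of the `x i`, a unit modulo `I`, is a unit of `R`, so the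
`x i` themselves can serve as the lifts. With `Φ e := (b (x i) e)_i` and `A` the Gram matrix,
`P e := ∑ i, (A⁻¹ Φ e)_i • x i` is a projection onto the span of the `x i` with kernel
`G' := ker Φ`, the orthogonal complement. Since `Φ` maps `G + I•E` into `I^n`, `P` maps it into
`I•E`, and `e = (e - P e) + P e` shows that `G'` and `G` agree modulo `I•E`.
-/

open LinearMap Matrix

theorem Submodule.sup_smul_top_le_comap {R E : Type*} [CommRing R] [AddCommGroup E] [Module R E]
    {I : Ideal R} {G : Submodule R E} {f : E →ₗ[R] R} (hG : G ≤ Submodule.comap f I) :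
    G ⊔ I • ⊤ ≤ Submodule.comap f I :=
  sup_le hG <| Submodule.smul_le.mpr fun r hr e _ => by simpa using I.mul_mem_right (f e) hr

section PairingProjection

variable {R E ι : Type*} [CommRing R] [AddCommGroup E] [Module R E] [Fintype ι] [DecidableEq ι]
  (Φ : E →ₗ[R] ι → R) (x : ι → E)

def pairingMatrix : Matrix ι ι R := Matrix.of fun i j => Φ (x j) i

theorem comp_linearCombination_eq_toLin'_pairingMatrix :
    Φ ∘ₗ Fintype.linearCombination R x = toLin' (pairingMatrix Φ x) := by
  ext c i
  simp [Fintype.linearCombination_apply, pairingMatrix, mulVec, dotProduct, Pi.single_apply]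

noncomputable def pairingProj : E →ₗ[R] E :=
  Fintype.linearCombination R x ∘ₗ toLin' (pairingMatrix Φ x)⁻¹ ∘ₗ Φ

variable {Φ x}

theorem pairingProj_mem_smul_top {I : Ideal R} {e : E} (he : ∀ i, Φ e i ∈ I) :
    pairingProj Φ x e ∈ I • (⊤ : Submodule R E) := by
  rw [pairingProj, LinearMap.comp_apply, LinearMap.comp_apply, Fintype.linearCombination_apply]
  refine Submodule.sum_mem _ fun i _ => Submodule.smul_mem_smul ?_ Submodule.mem_top
  rw [toLin'_apply, mulVec, dotProduct]
  exact I.sum_mem fun j _ => I.mul_mem_left _ (he j)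

variable (h : IsUnit (pairingMatrix Φ x).det)
include h

theorem toLin'_pairingMatrix_inv_comp_comp_linearCombination :
    toLin' (pairingMatrix Φ x)⁻¹ ∘ₗ Φ ∘ₗ Fintype.linearCombination R x = LinearMap.id := by
  rw [comp_linearCombination_eq_toLin'_pairingMatrix, ← toLin'_mul, nonsing_inv_mul _ h, toLin'_one]

theorem comp_pairingProj : Φ ∘ₗ pairingProj Φ x = Φ := by
  rw [pairingProj, ← comp_assoc, comp_linearCombination_eq_toLin'_pairingMatrix, ← comp_assoc,
    ← toLin'_mul, mul_nonsing_inv _ h, toLin'_one, id_comp]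

theorem pairingProj_comp_linearCombination :
    pairingProj Φ x ∘ₗ Fintype.linearCombination R x = Fintype.linearCombination R x := by
  rw [pairingProj, comp_assoc, comp_assoc,
    toLin'_pairingMatrix_inv_comp_comp_linearCombination h, comp_id]

theorem linearIndependent_of_isUnit_det_pairingMatrix : LinearIndependent R x :=
  linearIndependent_iff_injective_fintypeLinearCombination.mpr <|
    Function.LeftInverse.injective (g := toLin' (pairingMatrix Φ x)⁻¹ ∘ₗ Φ) fun c =>
      congr($(toLin'_pairingMatrix_inv_comp_comp_linearCombination h) c)

theorem isIdempotentElem_pairingProj : IsIdempotentElem (pairingProj Φ x) := by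
  change pairingProj Φ x ∘ₗ Fintype.linearCombination R x ∘ₗ _ = _
  rw [← comp_assoc, pairingProj_comp_linearCombination h, pairingProj]

theorem range_pairingProj : range (pairingProj Φ x) = Submodule.span R (Set.range x) := by
  rw [← Fintype.range_linearCombination]
  refine le_antisymm (range_comp_le_range _ _) ?_
  conv_lhs => rw [← pairingProj_comp_linearCombination h]
  exact range_comp_le_range _ _

theorem ker_pairingProj : ker (pairingProj Φ x) = ker Φ := by
  refine le_antisymm ?_ fun e he => by simp [pairingProj, mem_ker.mp he]
  conv_rhs => rw [← comp_pairingProj h]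
  exact ker_le_ker_comp _ _

theorem isCompl_span_range_ker : IsCompl (Submodule.span R (Set.range x)) (ker Φ) := by
  rw [← range_pairingProj h, ← ker_pairingProj h]
  exact (isIdempotentElem_pairingProj h).isCompl

theorem ker_sup_smul_top_eq_of_span_sup_eq_top {I : Ideal R} {G : Submodule R E}
    (hspan : Submodule.span R (Set.range x) ⊔ G ⊔ I • ⊤ = ⊤)
    (horth : ∀ g ∈ G, ∀ i, Φ g i ∈ I) :
    ker Φ ⊔ I • ⊤ = G ⊔ I • ⊤ := by
  have hproj : ∀ e ∈ G ⊔ I • ⊤, pairingProj Φ x e ∈ I • ⊤ := fun e he =>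
    pairingProj_mem_smul_top fun i =>
      Submodule.sup_smul_top_le_comap (f := LinearMap.proj (φ := fun _ => R) i ∘ₗ Φ)
        (fun g hg => horth g hg i) he
  have hsub : ∀ e, e - pairingProj Φ x e ∈ ker Φ := fun e => by
    rw [mem_ker, map_sub, ← LinearMap.comp_apply, comp_pairingProj h, sub_self]
  refine le_antisymm (sup_le ?_ le_sup_right) fun e he => ?_
  · intro e he
    rw [sup_assoc] at hspan
    obtain ⟨f, hf, k, hk, rfl⟩ := Submodule.mem_sup.mp (hspan.symm ▸ Submodule.mem_top : e ∈ _)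
    have hPf : pairingProj Φ x f = f :=
      (isIdempotentElem_pairingProj h).mem_range_iff.mp (range_pairingProj h ▸ hf)
    have hPe : pairingProj Φ x (f + k) = 0 := by
      rwa [← mem_ker, ker_pairingProj h]
    rw [map_add, hPf] at hPe
    rw [eq_neg_of_add_eq_zero_left hPe, neg_add_eq_sub]
    exact sub_mem hk (Submodule.mem_sup_right (hproj k hk))
  · rw [← sub_add_cancel e (pairingProj Φ x e)]
    exact Submodule.add_mem_sup (hsub e) (hproj e he)

end PairingProjection

theorem hermitian_lifting_along_jacobson_ideal_general
    {R : Type*} [CommRing R]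
    (I : Ideal R) (hIJ : I ≤ (⊥ : Ideal R).jacobson)
    {E : Type*} [AddCommGroup E] [Module R E]
    (b : E → E → R)
    (hb_addr : ∀ x y y' : E, b x (y + y') = b x y + b x y')
    (hb_sesqr : ∀ (r : R) (x y : E), b x (r • y) = b x y * r)
    (n : ℕ) (x : Fin n → E) (G : Submodule R E)
    -- `E/IE = F̄ ⊥ Ḡ` with `F̄` the (free) span of the classes of the `x i`
    (horth : ∀ i, ∀ g ∈ G, b (x i) g ∈ I)
    (hspan : Submodule.span R (Set.range x) ⊔ G ⊔ (I • (⊤ : Submodule R E)) = ⊤)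
    (hgram : IsUnit (Ideal.Quotient.mk I
      (Matrix.det (Matrix.of fun i j => b (x i) (x j))))) :
    ∃ (y : Fin n → E) (G' : Submodule R E),
      -- `F/IF = F̄` : the lifts reduce to the given classes mod `I•E`
      (∀ i, y i - x i ∈ (I • (⊤ : Submodule R E))) ∧
      -- `F` is free ...
      LinearIndependent R y ∧
      -- ... and non-degenerate
      IsUnit (Matrix.det (Matrix.of fun i j => b (y i) (y j))) ∧
      -- `E = F ⊥ G'` is an orthogonal decomposition
      (∀ i, ∀ g ∈ G', b (y i) g = 0) ∧
      IsCompl (Submodule.span R (Set.range y)) G' ∧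
      -- `G'/IG' = Ḡ`
      G' ⊔ (I • (⊤ : Submodule R E)) = G ⊔ (I • (⊤ : Submodule R E)) := by
  let Φ : E →ₗ[R] Fin n → R := LinearMap.pi fun i =>
    { toFun := b (x i)
      map_add' := hb_addr (x i)
      map_smul' := fun r e => by rw [hb_sesqr, smul_eq_mul, mul_comm]; rfl }
  have hdet : IsUnit (pairingMatrix Φ x).det :=
    (isLocalHom_of_le_jacobson_bot I hIJ).map_nonunit _ hgram
  refine ⟨x, ker Φ, fun i => by simp, linearIndependent_of_isUnit_det_pairingMatrix hdet, hdet,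
    fun i g hg => congrFun (mem_ker.mp hg) i, isCompl_span_range_ker hdet,
    ker_sup_smul_top_eq_of_span_sup_eq_top hdet hspan fun g hg i => horth i g hg⟩

theorem hermitian_lifting_along_jacobson_ideal
    {R : Type*} [CommRing R] (σ : R →+* R) (hσ : ∀ r, σ (σ r) = r)
    (I : Ideal R) (hIJ : I ≤ (⊥ : Ideal R).jacobson) (hIσ : ∀ r ∈ I, σ r ∈ I)
    {E : Type*} [AddCommGroup E] [Module R E]
    [Module.Finite R E] [Module.Projective R E]
    (b : E → E → R)
    (hb_addl : ∀ x x' y : E, b (x + x') y = b x y + b x' y)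
    (hb_addr : ∀ x y y' : E, b x (y + y') = b x y + b x y')
    (hb_sesql : ∀ (r : R) (x y : E), b (r • x) y = σ r * b x y)
    (hb_sesqr : ∀ (r : R) (x y : E), b x (r • y) = b x y * r)
    (hb_herm : ∀ x y : E, b x y = σ (b y x))
    (n : ℕ) (x : Fin n → E) (G : Submodule R E)
    -- `E/IE = F̄ ⊥ Ḡ` with `F̄` the (free) span of the classes of the `x i`
    (horth : ∀ i, ∀ g ∈ G, b (x i) g ∈ I)
    (hspan : Submodule.span R (Set.range x) ⊔ G ⊔ (I • (⊤ : Submodule R E)) = ⊤)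
    (hgram : IsUnit (Ideal.Quotient.mk I
      (Matrix.det (Matrix.of fun i j => b (x i) (x j))))) :
    ∃ (y : Fin n → E) (G' : Submodule R E),
      -- `F/IF = F̄` : the lifts reduce to the given classes mod `I•E`
      (∀ i, y i - x i ∈ (I • (⊤ : Submodule R E))) ∧
      -- `F` is free ...
      LinearIndependent R y ∧
      -- ... and non-degenerate
      IsUnit (Matrix.det (Matrix.of fun i j => b (y i) (y j))) ∧
      -- `E = F ⊥ G'` is an orthogonal decomposition
      (∀ i, ∀ g ∈ G', b (y i) g = 0) ∧
      IsCompl (Submodule.span R (Set.range y)) G' ∧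
      -- `G'/IG' = Ḡ`
      G' ⊔ (I • (⊤ : Submodule R E)) = G ⊔ (I • (⊤ : Submodule R E)) :=
  hermitian_lifting_along_jacobson_ideal_general I hIJ b hb_addr hb_sesqr n x G horth hspan hgram
end

section
/- Let (R,m) be a strictly henselian local ring with involution such that 1/2 ∈ R and the induced involution on the residue field R/m is trivial. Then every element x ∈ R× with σ(x) = x admits c ∈ R× with σ(c)·x·c = 1; consequently every rank-one non-degenerate Hermitian form over R is isometric to ⟨1⟩, and non-degenerate Hermitian modules over R are determined up to isometry by their rank. -/
/-!
Over a henselian local ring with separably closed residue field in which `2` is a unit, every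
unit is a square (lift a square root from the residue field by Hensel's lemma). If `x = σ x` is a
unit and `c² = x⁻¹`, then `σ c` is another square root of `x⁻¹` congruent to `c` modulo `m`, and
`σ c + c ≡ 2c` is a unit, so `σ c = c` and `σ(c) x c = 1`.

For matrices, diagonalise by induction on the size: an invertible Hermitian matrix has a unit
entry; if no diagonal entry is a unit, a transvection produces the diagonal entry
`a_pp + a_qq + 2 a_pq + (σ a_pq - a_pq)`, which is a unit. Scaling makes this entry `1`, and
clearing its row and column splits off `⟨1⟩` from a smaller invertible Hermitian matrix.
-/

open Matrix IsLocalRing Polynomial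

section LocalRing

variable {R : Type*} [CommRing R] [IsLocalRing R]

theorem IsUnit.add_of_mem_maximalIdeal {u a : R} (hu : IsUnit u) (ha : a ∈ maximalIdeal R) :
    IsUnit (u + a) := by
  by_contra h
  exact (mem_maximalIdeal u).mp (by simpa using sub_mem (show u + a ∈ maximalIdeal R from h) ha) hu

theorem eq_of_mul_self_eq_of_sub_mem_maximalIdeal (h2 : IsUnit (2 : R)) {a b : R}
    (hb : IsUnit b) (hab : a * a = b * b) (hsub : a - b ∈ maximalIdeal R) : a = b := by
  have hsum : IsUnit (a + b) := by
    simpa [two_mul, add_comm, add_left_comm, add_assoc] using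
      (h2.mul hb).add_of_mem_maximalIdeal hsub
  have : (a - b) * (a + b) = 0 := by linear_combination hab
  exact sub_eq_zero.mp (hsum.mul_left_eq_zero.mp this)

end LocalRing

namespace HenselianLocalRing

variable {R : Type*} [CommRing R] [HenselianLocalRing R]

theorem isSquare_of_isUnit (hsep : IsSepClosed (ResidueField R)) (h2 : IsUnit (2 : R))
    {y : R} (hy : IsUnit y) : IsSquare y := by
  have : NeZero (2 : ResidueField R) := ⟨map_ofNat (residue R) 2 ▸ (h2.map (residue R)).ne_zero⟩
  obtain ⟨b, hb⟩ := IsSepClosed.exists_pow_nat_eq (residue R y) 2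
  obtain ⟨a₀, rfl⟩ := residue_surjective b
  have ha₀ : IsUnit a₀ := by
    rw [← residue_ne_zero_iff_isUnit]
    rintro h
    exact (residue_ne_zero_iff_isUnit y).mpr hy (by simp [← hb, h])
  obtain ⟨a, ha, -⟩ := is_henselian (X ^ 2 - C y) (monic_X_pow_sub_C y two_ne_zero) a₀
    (by rw [← residue_eq_zero_iff]; simp [hb])
    (by convert h2.mul ha₀ using 1; simp; ring)
  exact ⟨a, by simpa [sub_eq_zero, sq, eq_comm] using ha⟩

theorem exists_unit_map_mul_mul_eq_one (hsep : IsSepClosed (ResidueField R))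
    (h2 : IsUnit (2 : R)) {σ : R →+* R} (hσ : ∀ r, σ r - r ∈ maximalIdeal R) (x : Rˣ)
    (hx : σ x = x) : ∃ c : Rˣ, σ c * x * c = 1 := by
  obtain ⟨c, hc⟩ := isSquare_of_isUnit hsep h2 x⁻¹.isUnit
  have hcu : IsUnit c := isUnit_of_mul_isUnit_left (hc ▸ x⁻¹.isUnit)
  have hxinv : σ ↑x⁻¹ = ↑x⁻¹ := Units.eq_inv_of_mul_eq_one_left (by rw [← hx, ← map_mul]; simp)
  have hσc : σ c = c :=
    eq_of_mul_self_eq_of_sub_mem_maximalIdeal h2 hcu (by rw [← map_mul, ← hc, hxinv]) (hσ c)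
  refine ⟨hcu.unit, ?_⟩
  rw [IsUnit.unit_spec, hσc, mul_right_comm, ← hc, x.inv_mul]

end HenselianLocalRing

namespace Matrix

variable {R : Type*} [CommRing R] {σ : R →+* R} {ι κ : Type*} [DecidableEq ι] [DecidableEq κ]

theorem map_transpose_one : (1 : Matrix ι ι R)ᵀ.map σ = 1 := by
  rw [transpose_one, Matrix.map_one _ σ.map_zero σ.map_one]

theorem map_transpose_transvection {p q : ι} (c : R) :
    (transvection p q c)ᵀ.map σ = transvection q p (σ c) := by
  ext i j
  simp [transvection, single, one_apply, apply_ite σ, and_comm]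

theorem reindex_sumCompl_eq_fromBlocks {A : Matrix ι ι R} (hA : Aᵀ.map σ = A) {r : ι}
    (hr : A r r = 1) : ∃ Q T, reindex (Equiv.sumCompl (· = r)).symm (Equiv.sumCompl (· = r)).symm A
      = fromBlocks 1 Q (Qᵀ.map σ) T := by
  set B := reindex (Equiv.sumCompl (· = r)).symm (Equiv.sumCompl (· = r)).symm A
  refine ⟨B.toBlocks₁₂, B.toBlocks₂₂, ?_⟩
  conv_lhs => rw [← fromBlocks_toBlocks B]
  congr
  · ext ⟨i, rfl⟩ ⟨j, rfl⟩
    simp [B, toBlocks₁₁, hr]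
  · ext i j
    simpa [B, toBlocks₂₁, toBlocks₁₂] using (congr_fun₂ hA (i : ι) j).symm

variable [Fintype ι] [Fintype κ]

theorem det_map_transpose (C : Matrix ι ι R) : (Cᵀ.map σ).det = σ C.det := by
  rw [← det_transpose C, RingHom.map_det]; rfl

variable (σ) in
/-- Congruence of Gram matrices of `σ`-sesquilinear forms: `B = σ(Cᵀ) A C` with `C` invertible. -/
def SesqCongruent (A B : Matrix ι ι R) : Prop :=
  ∃ C : Matrix ι ι R, IsUnit C.det ∧ Cᵀ.map σ * A * C = B

namespace SesqCongruent

@[refl]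
theorem refl (A : Matrix ι ι R) : SesqCongruent σ A A :=
  ⟨1, by simp, by rw [map_transpose_one, one_mul, mul_one]⟩

theorem trans {A B C : Matrix ι ι R} (hAB : SesqCongruent σ A B) (hBC : SesqCongruent σ B C) :
    SesqCongruent σ A C := by
  obtain ⟨P, hP, rfl⟩ := hAB
  obtain ⟨Q, hQ, rfl⟩ := hBC
  refine ⟨P * Q, by simpa only [det_mul] using hP.mul hQ, ?_⟩
  rw [transpose_mul, Matrix.map_mul]
  noncomm_ring

theorem symm {A B : Matrix ι ι R} (h : SesqCongruent σ A B) : SesqCongruent σ B A := by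
  obtain ⟨P, hP, rfl⟩ := h
  have hPinv : P * P⁻¹ = 1 := mul_nonsing_inv P hP
  have hPinvσ : P⁻¹ᵀ.map σ * Pᵀ.map σ = 1 := by
    rw [← Matrix.map_mul, ← transpose_mul, hPinv, map_transpose_one]
  refine ⟨P⁻¹, isUnit_nonsing_inv_det P hP, ?_⟩
  calc P⁻¹ᵀ.map σ * (Pᵀ.map σ * A * P) * P⁻¹
      = (P⁻¹ᵀ.map σ * Pᵀ.map σ) * A * (P * P⁻¹) := by noncomm_ring
    _ = A := by rw [hPinvσ, hPinv, one_mul, mul_one]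

theorem isUnit_det {A B : Matrix ι ι R} (h : SesqCongruent σ A B) (hA : IsUnit A.det) :
    IsUnit B.det := by
  obtain ⟨P, hP, rfl⟩ := h
  rw [det_mul, det_mul, det_map_transpose]
  exact ((hP.map σ).mul hA).mul hP

theorem map_transpose_eq_self (hσ : Function.Involutive σ) {A B : Matrix ι ι R}
    (h : SesqCongruent σ A B) (hA : Aᵀ.map σ = A) : Bᵀ.map σ = B := by
  obtain ⟨P, -, rfl⟩ := h
  have hP : (Pᵀ.map σ)ᵀ.map σ = P := by
    ext i j; exact hσ (P i j)
  rw [transpose_mul, transpose_mul, Matrix.map_mul, Matrix.map_mul, hP, hA, mul_assoc]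

theorem reindex {A B : Matrix ι ι R} (e : ι ≃ κ) (h : SesqCongruent σ A B) :
    SesqCongruent σ (Matrix.reindex e e A) (Matrix.reindex e e B) := by
  obtain ⟨P, hP, rfl⟩ := h
  refine ⟨Matrix.reindex e e P, by rwa [det_reindex_self], ?_⟩
  simp only [reindex_apply, transpose_submatrix, ← submatrix_map, submatrix_mul_equiv]

theorem fromBlocks {A A' : Matrix ι ι R} {B B' : Matrix κ κ R} (hA : SesqCongruent σ A A')
    (hB : SesqCongruent σ B B') :
    SesqCongruent σ (Matrix.fromBlocks A 0 0 B) (Matrix.fromBlocks A' 0 0 B') := by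
  obtain ⟨P, hP, rfl⟩ := hA
  obtain ⟨Q, hQ, rfl⟩ := hB
  refine ⟨Matrix.fromBlocks P 0 0 Q, by simpa only [det_fromBlocks_zero₂₁] using hP.mul hQ, ?_⟩
  simp [fromBlocks_transpose, fromBlocks_map, fromBlocks_multiply]

end SesqCongruent

theorem sesqCongruent_fromBlocks_one (T : Matrix κ κ R) (Q : Matrix ι κ R) :
    SesqCongruent σ (fromBlocks 1 Q (Qᵀ.map σ) T) (fromBlocks 1 0 0 (T - Qᵀ.map σ * Q)) := by
  refine ⟨fromBlocks 1 (-Q) 0 1, by simp, ?_⟩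
  simp [fromBlocks_transpose, fromBlocks_map, fromBlocks_multiply,
    Matrix.map_neg _ (map_neg σ), neg_add_eq_sub]

theorem exists_sesqCongruent_apply_self_eq_one (A : Matrix ι ι R) (r : ι) {c : R}
    (hc : IsUnit c) (h : σ c * A r r * c = 1) : ∃ B, SesqCongruent σ A B ∧ B r r = 1 := by
  let d : ι → R := Function.update 1 r c
  refine ⟨_, ⟨diagonal d, ?_, rfl⟩, ?_⟩
  · simpa [d, det_diagonal, Finset.prod_update_of_mem] using hc
  · simpa [d, diagonal_transpose, diagonal_map, diagonal_mul, mul_diagonal] using h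

theorem sesqCongruent_one_of_apply_self_eq_one (hσ : Function.Involutive σ)
    {A : Matrix ι ι R} (hA : Aᵀ.map σ = A) (hdet : IsUnit A.det) {r : ι} (hr : A r r = 1)
    (ih : ∀ T : Matrix {i // ¬i = r} {i // ¬i = r} R, Tᵀ.map σ = T → IsUnit T.det →
      SesqCongruent σ T 1) :
    SesqCongruent σ A 1 := by
  set e := (Equiv.sumCompl (· = r)).symm
  obtain ⟨Q, T, hAe⟩ := reindex_sumCompl_eq_fromBlocks hA hr
  have hsplit : SesqCongruent σ (reindex e e A) (fromBlocks 1 0 0 (T - Qᵀ.map σ * Q)) :=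
    hAe ▸ sesqCongruent_fromBlocks_one T Q
  have hherm := hsplit.map_transpose_eq_self hσ
    (by simp only [reindex_apply, transpose_submatrix, ← submatrix_map, hA])
  have hdet' := hsplit.isUnit_det (by rwa [det_reindex_self])
  have hT : SesqCongruent σ (T - Qᵀ.map σ * Q) 1 := by
    refine ih _ ?_ ?_
    · simpa [fromBlocks_transpose, fromBlocks_map, map_transpose_one] using hherm
    · simpa [det_fromBlocks_zero₂₁] using hdet'
  simpa using ((hsplit.trans ((SesqCongruent.refl 1).fromBlocks hT)).reindex e.symm)

section IsLocalRing

variable [IsLocalRing R]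

theorem exists_isUnit_apply_of_isUnit_det [Nonempty ι] {A : Matrix ι ι R} (hA : IsUnit A.det) :
    ∃ p q, IsUnit (A p q) := by
  by_contra! h
  have hres : A.map (residue R) = 0 := by
    ext p q; simpa [residue_eq_zero_iff] using h p q
  have := hA.map (residue R)
  rw [RingHom.map_det, RingHom.mapMatrix_apply, hres, det_zero] at this
  exact not_isUnit_zero this

theorem exists_sesqCongruent_isUnit_apply_self [Nonempty ι] (h2 : IsUnit (2 : R))
    (hσ : ∀ r, σ r - r ∈ maximalIdeal R) {A : Matrix ι ι R} (hA : Aᵀ.map σ = A)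
    (hdet : IsUnit A.det) : ∃ B, SesqCongruent σ A B ∧ ∃ r, IsUnit (B r r) := by
  by_cases hdiag : ∃ r, IsUnit (A r r)
  · exact ⟨A, .refl A, hdiag⟩
  simp only [not_exists] at hdiag
  obtain ⟨p, q, hpq⟩ := exists_isUnit_apply_of_isUnit_det hdet
  have hne : q ≠ p := fun h => hdiag p (h ▸ hpq)
  refine ⟨_, ⟨transvection q p 1, by rw [det_transvection_of_ne q p hne]; exact isUnit_one, rfl⟩,
    p, ?_⟩
  have hqp : A q p = σ (A p q) := (congr_fun₂ hA q p).symm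
  have hentry : ((transvection q p 1)ᵀ.map σ * A * transvection q p (1 : R) : Matrix ι ι R) p p
      = 2 * A p q + ((σ (A p q) - A p q) + (A p p + A q q)) := by
    rw [map_transpose_transvection, map_one, mul_assoc, transvection_mul_apply_same,
      mul_transvection_apply_same, mul_transvection_apply_same, hqp]
    ring
  rw [hentry]
  exact (h2.mul hpq).add_of_mem_maximalIdeal (add_mem (hσ _) (add_mem (hdiag p) (hdiag q)))

end IsLocalRing

theorem sesqCongruent_one_of_map_transpose_eq_self [HenselianLocalRing R]
    (hsep : IsSepClosed (ResidueField R)) (hσ : Function.Involutive σ) (h2 : IsUnit (2 : R))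
    (hres : ∀ r, σ r - r ∈ maximalIdeal R) {A : Matrix ι ι R} (hA : Aᵀ.map σ = A)
    (hdet : IsUnit A.det) : SesqCongruent σ A 1 := by
  induction hn : Fintype.card ι generalizing ι with
  | zero =>
    have := Fintype.card_eq_zero_iff.mp hn
    rw [Subsingleton.elim A 1]
  | succ n ih =>
    have : Nonempty ι := Fintype.card_pos_iff.mp (by omega)
    obtain ⟨A₁, hAA₁, r, hr⟩ := exists_sesqCongruent_isUnit_apply_self h2 hres hA hdet
    obtain ⟨c, hc⟩ := HenselianLocalRing.exists_unit_map_mul_mul_eq_one hsep h2 hres hr.unit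
      (congr_fun₂ (hAA₁.map_transpose_eq_self hσ hA) r r)
    obtain ⟨A₂, hA₁A₂, hA₂r⟩ := exists_sesqCongruent_apply_self_eq_one A₁ r c.isUnit hc
    have hAA₂ := hAA₁.trans hA₁A₂
    refine hAA₂.trans (sesqCongruent_one_of_apply_self_eq_one hσ
      (hAA₂.map_transpose_eq_self hσ hA) (hAA₂.isUnit_det hdet) hA₂r fun T hT hTdet => ?_)
    refine ih hT hTdet ?_
    rw [Fintype.card_subtype_compl, Fintype.card_subtype_eq, hn, Nat.add_sub_cancel]

end Matrix

theorem hermitian_forms_determined_by_rank_over_strictly_henselian_local_ring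
    {R : Type*} [CommRing R] [HenselianLocalRing R]
    (hsep : IsSepClosed (IsLocalRing.ResidueField R))
    (σ : R →+* R) (hinv : ∀ r, σ (σ r) = r)
    (h2 : IsUnit (2 : R))
    (hres : ∀ r : R, σ r - r ∈ IsLocalRing.maximalIdeal R) :
    -- rank-one forms: `σ(c) * x * c = 1`
    (∀ x : Rˣ, σ (x : R) = (x : R) → ∃ c : Rˣ, σ (c : R) * (x : R) * (c : R) = 1) ∧
    -- non-degenerate Hermitian forms are determined by rank
    (∀ (n : ℕ) (A B : Matrix (Fin n) (Fin n) R),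
      (∀ i j, σ (A j i) = A i j) → (∀ i j, σ (B j i) = B i j) →
      IsUnit A.det → IsUnit B.det →
      ∃ C : Matrix (Fin n) (Fin n) R, IsUnit C.det ∧
        (C.transpose.map σ) * A * C = B) := by
  refine ⟨HenselianLocalRing.exists_unit_map_mul_mul_eq_one hsep h2 hres,
    fun n A B hA hB hAdet hBdet => ?_⟩
  have hA1 := sesqCongruent_one_of_map_transpose_eq_self hsep hinv h2 hres (ext hA) hAdet
  have hB1 := sesqCongruent_one_of_map_transpose_eq_self hsep hinv h2 hres (ext hB) hBdet
  exact hA1.trans hB1.symm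
end

section
/- Let V be a locally free sheaf of finite rank on a scheme X equipped with a non-degenerate symmetric bilinear form φ : V ≅ V*, and let M ⊆ V be a locally free subsheaf that is locally a direct summand such that φ|_M is non-degenerate. For any morphism of schemes g : Y → X, the canonical map g*(M⊥) → (g*M)⊥ is an isomorphism, where M⊥ = ker(V → V* → M*). -/
/-!
Non-degeneracy of `φ|_M` says that `V → M*, v ↦ φ(v, -)|_M` restricts to an isomorphism on `M`,
so `V = M ⊕ M⊥`. This splitting survives base change, which gives injectivity and reduces the
description of the image to the non-degeneracy of `φ_S` on `S ⊗ M`. For the latter, a finite dual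
basis of the finite projective module `M`, transported through `M ≅ M*`, yields an identity
`m = ∑ φ(m, xᵢ) zᵢ` that base-changes verbatim.
-/

open TensorProduct
open LinearMap (BilinForm)

theorem LinearMap.isCompl_ker_of_bijective_comp_subtype {R V W : Type*} [CommRing R]
    [AddCommGroup V] [Module R V] [AddCommGroup W] [Module R W] {L : V →ₗ[R] W}
    {p : Submodule R V} (h : Function.Bijective (L ∘ₗ p.subtype)) :
    IsCompl p (LinearMap.ker L) := by
  let e := LinearEquiv.ofBijective _ h
  have := LinearMap.isCompl_of_proj (f := e.symm.toLinearMap ∘ₗ L) fun x => e.symm_apply_apply x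
  rwa [LinearEquiv.ker_comp] at this

namespace Submodule

variable {R V : Type*} (S : Type*) [CommRing R] [CommRing S] [Algebra R S]
  [AddCommGroup V] [Module R V] {p q : Submodule R V}

theorem injective_baseChange_subtype_of_isCompl (h : IsCompl p q) :
    Function.Injective (p.subtype.baseChange S) := by
  refine LinearMap.injective_of_comp_eq_id _ ((p.projectionOnto q h).baseChange S) ?_
  rw [← LinearMap.baseChange_comp, projectionOnto_comp_subtype, LinearMap.baseChange_id]

theorem exists_baseChange_subtype_add_eq_of_isCompl (h : IsCompl p q) (w : S ⊗[R] V) :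
    ∃ a b, p.subtype.baseChange S a + q.subtype.baseChange S b = w := by
  have hsum : p.subtype ∘ₗ p.projectionOnto q h + q.subtype ∘ₗ q.projectionOnto p h.symm =
      LinearMap.id := LinearMap.ext (projection_add_projection_eq_self h)
  refine ⟨(p.projectionOnto q h).baseChange S w, (q.projectionOnto p h.symm).baseChange S w, ?_⟩
  simpa [LinearMap.baseChange_add, LinearMap.baseChange_comp] using
    congr(LinearMap.baseChange S $hsum w)

end Submodule

theorem Module.Projective.exists_finite_dual_basis (R M : Type*) [CommRing R] [AddCommGroup M]
    [Module R M] [Module.Finite R M] [Module.Projective R M] :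
    ∃ (n : ℕ) (x : Fin n → M) (f : Fin n → Module.Dual R M), ∀ m, ∑ i, f i m • x i = m := by
  obtain ⟨n, s, r, -, -, hsr⟩ := Module.Finite.exists_comp_eq_id_of_projective R M
  refine ⟨n, fun i => s (Pi.single i 1), fun i => LinearMap.proj i ∘ₗ r, fun m => ?_⟩
  conv_rhs => rw [← LinearMap.id_apply (R := R) m, ← hsr, LinearMap.comp_apply,
    pi_eq_sum_univ' (r m), map_sum]
  simp

namespace LinearMap.BilinForm

variable {R S V W₁ W₂ : Type*} [CommRing R] [CommRing S] [Algebra R S]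
  [AddCommGroup V] [Module R V] [AddCommGroup W₁] [Module R W₁] [AddCommGroup W₂] [Module R W₂]

theorem exists_sum_smul_eq_self_of_bijective [Module.Finite R V] [Module.Projective R V]
    {B : BilinForm R V} (hB : Function.Bijective B) :
    ∃ (n : ℕ) (x z : Fin n → V), ∀ m, ∑ i, B m (x i) • z i = m := by
  obtain ⟨n, x, f, hxf⟩ := Module.Projective.exists_finite_dual_basis R V
  choose z hz using fun i => hB.2 (f i)
  refine ⟨n, x, z, fun m => hB.1 (LinearMap.ext fun v => ?_)⟩
  calc B (∑ i, B m (x i) • z i) v = B m (∑ i, f i v • x i) := by simp [hz, mul_comm]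
    _ = B m v := by rw [hxf]

theorem sum_baseChange_smul_eq_self {B : BilinForm R V} {n : ℕ} {x z : Fin n → V}
    (h : ∀ m, ∑ i, B m (x i) • z i = m) (a : S ⊗[R] V) :
    ∑ i, B.baseChange S a (1 ⊗ₜ x i) • (1 ⊗ₜ[R] z i : S ⊗[R] V) = a := by
  induction a using TensorProduct.induction_on with
  | zero => simp
  | tmul s m =>
    conv_rhs => rw [← h m, tmul_sum]
    simp [smul_tmul']
  | add a b ha hb =>
    simp only [map_add, LinearMap.add_apply, add_smul, Finset.sum_add_distrib, ha, hb]

theorem separatingLeft_baseChange_of_bijective [Module.Finite R V] [Module.Projective R V]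
    {B : BilinForm R V} (hB : Function.Bijective B) : (B.baseChange S).SeparatingLeft := by
  obtain ⟨n, x, z, h⟩ := exists_sum_smul_eq_self_of_bijective hB
  intro a ha
  calc a = ∑ i, B.baseChange S a (1 ⊗ₜ x i) • (1 ⊗ₜ[R] z i : S ⊗[R] V) :=
        (sum_baseChange_smul_eq_self h a).symm
    _ = 0 := by simp [ha]

theorem compl₁₂_baseChange_eq_zero {B : BilinForm R V} {f : W₁ →ₗ[R] V} {g : W₂ →ₗ[R] V}
    (h : B.compl₁₂ f g = 0) :
    (B.baseChange S).compl₁₂ (f.baseChange S) (g.baseChange S) = 0 := by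
  ext x y
  simp [show B (f x) (g y) = 0 from LinearMap.congr_fun₂ h x y]

theorem restrict_baseChange (B : BilinForm R V) (p : Submodule R V) :
    (B.restrict p).baseChange S =
      (B.baseChange S).compl₁₂ (p.subtype.baseChange S) (p.subtype.baseChange S) := by
  ext x y
  simp

theorem mem_range_baseChange_subtype_iff_of_isCompl {B : BilinForm R V} {p q : Submodule R V}
    (hpq : IsCompl p q) (horth : B.compl₁₂ q.subtype p.subtype = 0)
    (hp : ((B.restrict p).baseChange S).SeparatingLeft) (w : S ⊗[R] V) :
    w ∈ range (q.subtype.baseChange S) ↔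
      ∀ u ∈ range (p.subtype.baseChange S), B.baseChange S w u = 0 := by
  have horth_S := congr_fun₂ (compl₁₂_baseChange_eq_zero (S := S) horth)
  simp only [compl₁₂_apply] at horth_S
  constructor
  · rintro ⟨b, rfl⟩ u ⟨c, rfl⟩
    exact horth_S b c
  · obtain ⟨a, b, rfl⟩ := Submodule.exists_baseChange_subtype_add_eq_of_isCompl S hpq w
    intro hw
    have ha : a = 0 := hp a fun c => by
      simpa [restrict_baseChange, horth_S] using hw _ ⟨c, rfl⟩
    exact ⟨b, by simp [ha]⟩

end LinearMap.BilinForm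

-- Affine form of the statement: `g` is `R → S`, and the isomorphism `g*(M⊥) ≅ (g*M)⊥` is expressed
-- as injectivity of `S ⊗ M⊥ → S ⊗ V` together with the description of its range.
theorem base_change_commutes_with_orthogonal_complement_general
    {R S V : Type*} [CommRing R] [CommRing S] [Algebra R S]
    [AddCommGroup V] [Module R V] [Module.Finite R V] [Module.Projective R V]
    (φ : LinearMap.BilinForm R V)
    (M : Submodule R V)
    -- non-degeneracy of `φ|_M`: the induced map `M → M*` is bijective
    (hMnd : Function.Bijective fun m : M => (φ (m : V)).domRestrict M)
    -- `Mperp` is the orthogonal complement `M⊥ = ker (V → V* → M*)`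
    (Mperp : Submodule R V)
    (hMperp : ∀ v : V, v ∈ Mperp ↔ ∀ m ∈ M, φ v m = 0) :
    Function.Injective (LinearMap.baseChange S Mperp.subtype) ∧
    ∀ w : S ⊗[R] V,
      (w ∈ LinearMap.range (LinearMap.baseChange S Mperp.subtype) ↔
        ∀ u ∈ LinearMap.range (LinearMap.baseChange S M.subtype),
          LinearMap.BilinForm.baseChange S φ w u = 0) := by
  have hMperp_eq : Mperp = LinearMap.ker (φ.compl₂ M.subtype) := by
    ext v
    simp [hMperp, LinearMap.ext_iff]
  have hcompl : IsCompl M Mperp :=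
    hMperp_eq ▸ LinearMap.isCompl_ker_of_bijective_comp_subtype hMnd
  have : Module.Finite R M := .of_surjective _ (M.projectionOnto_surjective hcompl)
  have : Module.Projective R M := .of_split M.subtype _ (M.projectionOnto_comp_subtype hcompl)
  refine ⟨Submodule.injective_baseChange_subtype_of_isCompl S hcompl.symm,
    LinearMap.BilinForm.mem_range_baseChange_subtype_iff_of_isCompl hcompl ?_
      (LinearMap.BilinForm.separatingLeft_baseChange_of_bijective hMnd)⟩
  ext x m
  exact (hMperp x).1 x.2 m m.2

theorem base_change_commutes_with_orthogonal_complement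
    {R S V : Type*} [CommRing R] [CommRing S] [Algebra R S]
    [AddCommGroup V] [Module R V] [Module.Finite R V] [Module.Projective R V]
    (φ : LinearMap.BilinForm R V) (hsymm : ∀ x y : V, φ x y = φ y x)
    -- non-degeneracy of φ: the induced map `V → V*` is bijective
    (hnd : Function.Bijective fun v : V => φ v)
    (M : Submodule R V)
    -- `M` is locally a direct summand
    (hMsplit : ∃ N : Submodule R V, IsCompl M N)
    -- non-degeneracy of `φ|_M`: the induced map `M → M*` is bijective
    (hMnd : Function.Bijective fun m : M => (φ (m : V)).domRestrict M)
    -- `Mperp` is the orthogonal complement `M⊥ = ker (V → V* → M*)`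
    (Mperp : Submodule R V)
    (hMperp : ∀ v : V, v ∈ Mperp ↔ ∀ m ∈ M, φ v m = 0) :
    Function.Injective (LinearMap.baseChange S Mperp.subtype) ∧
    ∀ w : S ⊗[R] V,
      (w ∈ LinearMap.range (LinearMap.baseChange S Mperp.subtype) ↔
        ∀ u ∈ LinearMap.range (LinearMap.baseChange S M.subtype),
          LinearMap.BilinForm.baseChange S φ w u = 0) :=
  base_change_commutes_with_orthogonal_complement_general φ M hMnd Mperp hMperp
end
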